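/- Let ⟨T, Σ, C₁ ⊑ C₂⟩ with Σ = N_C be an EL TBox abduction problem with T in normal form and ⊤-free, and Φ its first-order translation. If r(t, sk(t)) ∈ PI^{g+}_{N_C}(Φ) for a role r, a Skolem function sk and a ground term t, and sk(t) has a subterm of the form sk(t') for the same Skolem function sk, then r(t', sk(t')) ∈ PI^{g+}_{N_C}(Φ). -/
import Mathlib


namespace ELAbd

/-! ### EL concepts, TBoxes, semantics -/

inductive ELConcept : Type where
  | top : ELConcept
  | atom : ℕ → ELConcept
  | conj : ELConcept → ELConcept → ELConcept
  | ex : ℕ → ELConcept → ELConcept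
deriving DecidableEq

abbrev CI := ELConcept × ELConcept
abbrev TBox := Finset CI

structure Interp (α : Type) where
  conc : ℕ → Set α
  role : ℕ → Set (α × α)

def ELConcept.sem {α : Type} (I : Interp α) : ELConcept → Set α
  | .top => Set.univ
  | .atom A => I.conc A
  | .conj C D => C.sem I ∩ D.sem I
  | .ex r C => {d | ∃ e, (d, e) ∈ I.role r ∧ e ∈ C.sem I}

def Models {α : Type} (I : Interp α) (T : TBox) : Prop :=
  ∀ ci ∈ T, ci.1.sem I ⊆ ci.2.sem I

def Entails (T : TBox) (C D : ELConcept) : Prop :=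
  ∀ (α : Type) (I : Interp α), Models I T → C.sem I ⊆ D.sem I

def EntailsCI (T : TBox) (ci : CI) : Prop := Entails T ci.1 ci.2

def TEntails (T T' : TBox) : Prop :=
  ∀ (α : Type) (I : Interp α), Models I T → Models I T'

def TEquiv (T T' : TBox) : Prop := TEntails T T' ∧ TEntails T' T

/-- Equality of concepts modulo the convention that conjunctions are read as
sets (associativity, commutativity, idempotence, `⊤` as empty conjunction). -/
inductive CEq : ELConcept → ELConcept → Prop
  | refl (C) : CEq C C
  | symm {C D} : CEq C D → CEq D C
  | trans {C D E} : CEq C D → CEq D E → CEq C E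
  | congr_conj {C C' D D'} : CEq C C' → CEq D D' → CEq (.conj C D) (.conj C' D')
  | congr_ex {r C C'} : CEq C C' → CEq (.ex r C) (.ex r C')
  | comm (C D) : CEq (.conj C D) (.conj D C)
  | assoc (C D E) : CEq (.conj (.conj C D) E) (.conj C (.conj D E))
  | idem (C) : CEq (.conj C C) C
  | top_unit (C) : CEq (.conj .top C) C

/-- The relation `≼⊓` on concepts. -/
inductive PrecSq : ELConcept → ELConcept → Prop
  | refl (C) : PrecSq C C
  | conjL {C D'} (D'') : PrecSq C D' → PrecSq C (.conj D' D'')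
  | ex (r) {C' D'} : PrecSq C' D' → PrecSq (.ex r C') (.ex r D')

def ELConcept.concNames : ELConcept → Set ℕ
  | .top => ∅
  | .atom A => {A}
  | .conj C D => C.concNames ∪ D.concNames
  | .ex _ C => C.concNames

def ELConcept.roleNames : ELConcept → Set ℕ
  | .top => ∅
  | .atom _ => ∅
  | .conj C D => C.roleNames ∪ D.roleNames
  | .ex r C => {r} ∪ C.roleNames

def ELConcept.size : ELConcept → ℕ
  | .top => 1
  | .atom _ => 1
  | .conj C D => C.size + D.size + 1
  | .ex _ C => C.size + 1

def ELConcept.exCount : ELConcept → ℕ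
  | .top => 0
  | .atom _ => 0
  | .conj C D => C.exCount + D.exCount
  | .ex _ C => C.exCount + 1

def tboxSize (T : TBox) : ℕ := T.sum (fun ci => ci.1.size + ci.2.size)

def tboxConcNames (T : TBox) : Set ℕ :=
  {A | ∃ ci ∈ T, A ∈ ci.1.concNames ∪ ci.2.concNames}

def tboxRoleNames (T : TBox) : Set ℕ :=
  {r | ∃ ci ∈ T, r ∈ ci.1.roleNames ∪ ci.2.roleNames}

/-- Normal form (simultaneously `⊤`-free): every CI has one of the four shapes
`A ⊑ B`, `A₁ ⊓ A₂ ⊑ B`, `∃r.A ⊑ B`, `A ⊑ ∃r.B` with atomic concepts. -/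
def NFci (ci : CI) : Prop :=
  (∃ A B, ci = (ELConcept.atom A, ELConcept.atom B)) ∨
  (∃ A₁ A₂ B, ci = (ELConcept.conj (.atom A₁) (.atom A₂), ELConcept.atom B)) ∨
  (∃ r A B, ci = (ELConcept.ex r (.atom A), ELConcept.atom B)) ∨
  (∃ A r B, ci = (ELConcept.atom A, ELConcept.ex r (.atom B)))

def NormalForm (T : TBox) : Prop := ∀ ci ∈ T, NFci ci

/-- Normal form where the components may also be `⊤`. -/
def AtomTop (C : ELConcept) : Prop := C = .top ∨ ∃ A, C = ELConcept.atom A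

def NFciTop (ci : CI) : Prop :=
  (AtomTop ci.1 ∧ AtomTop ci.2) ∨
  (∃ A₁ A₂, ci.1 = ELConcept.conj A₁ A₂ ∧ AtomTop A₁ ∧ AtomTop A₂ ∧ AtomTop ci.2) ∨
  (∃ r A, ci.1 = ELConcept.ex r A ∧ AtomTop A ∧ AtomTop ci.2) ∨
  (∃ r B, ci.2 = ELConcept.ex r B ∧ AtomTop B ∧ AtomTop ci.1)

def NormalFormTop (T : TBox) : Prop := ∀ ci ∈ T, NFciTop ci

/-! ### EL description trees -/

noncomputable def conjOf (s : Finset ℕ) : ELConcept :=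
  (s.toList.map ELConcept.atom).foldr ELConcept.conj ELConcept.top

structure DescTree where
  V : Finset ℕ
  root : ℕ
  E : Finset (ℕ × ℕ × ℕ)      -- (v, r, w) : edge from v to w labeled r
  label : ℕ → Finset ℕ
  dep : ℕ → ℕ
  root_mem : root ∈ V
  edge_mem : ∀ e ∈ E, e.1 ∈ V ∧ e.2.2 ∈ V
  parent_unique : ∀ e ∈ E, ∀ e' ∈ E, e.2.2 = e'.2.2 → e = e'
  parent_exists : ∀ v ∈ V, v ≠ root → ∃ e ∈ E, e.2.2 = v
  dep_root : dep root = 0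
  dep_edge : ∀ e ∈ E, dep e.2.2 = dep e.1 + 1

noncomputable def DescTree.conceptAt (t : DescTree) : ℕ → ℕ → ELConcept
  | 0, v => conjOf (t.label v)
  | n + 1, v =>
      ((t.label v).toList.map ELConcept.atom ++
        (t.E.filter (fun e => e.1 = v)).toList.map
          (fun e => ELConcept.ex e.2.1 (t.conceptAt n e.2.2))).foldr ELConcept.conj ELConcept.top

/-- The concept `C_𝔗` represented by a description tree. -/
noncomputable def DescTree.concept (t : DescTree) : ELConcept := t.conceptAt t.V.card t.root

/-- `t` is a description tree for the concept `D` (concept equality is taken modulo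
the conjunctions-as-sets convention). -/
def Represents (t : DescTree) (D : ELConcept) : Prop := CEq t.concept D

/-- Weak homomorphism from `src` to `tgt`. -/
def WeakHom (src tgt : DescTree) (φ : ℕ → ℕ) : Prop :=
  φ src.root = tgt.root ∧ ∀ e ∈ src.E, (φ e.1, e.2.1, φ e.2.2) ∈ tgt.E

/-- `T`-homomorphism from `src` to `tgt`. -/
def THom (T : TBox) (src tgt : DescTree) (φ : ℕ → ℕ) : Prop :=
  WeakHom src tgt φ ∧
  ∀ w ∈ src.V, Entails T (conjOf (tgt.label (φ w))) (conjOf (src.label w))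

/-! ### Abduction problems, hypotheses, connection minimality -/

inductive AtomConj (S : Set ℕ) : ELConcept → Prop
  | atom {A} : A ∈ S → AtomConj S (.atom A)
  | conj {C D} : AtomConj S C → AtomConj S D → AtomConj S (.conj C D)

def IsHypothesis (T : TBox) (S : Set ℕ) (C1 C2 : ℕ) (H : TBox) : Prop :=
  (∀ ci ∈ H, (AtomConj S ci.1 ∨ ci.1 = ELConcept.top) ∧ AtomConj S ci.2) ∧
  Entails (T ∪ H) (.atom C1) (.atom C2) ∧
  ∀ ci ∈ H, ¬ EntailsCI T ci

def BuiltOver (S : Set ℕ) (C : ELConcept) : Prop := C.concNames ⊆ S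

/-- The TBox determined by condition (4) of the definition of connection minimality. -/
def hypSetOf (T : TBox) (t1 t2 : DescTree) (φ : ℕ → ℕ) : Set CI :=
  {ci | ∃ w ∈ t2.V, ci = (conjOf (t1.label (φ w)), conjOf (t2.label w)) ∧
        ¬ EntailsCI T ci}

/-- Conditions (1)–(4) of connection minimality, with explicit witnessing
description trees `t1`, `t2` for `D1`, `D2` and the weak homomorphism `φ`
from `𝔗_{D₂}` to `𝔗_{D₁}`. -/
def ConnMinimalWit (T : TBox) (S : Set ℕ) (C1 C2 : ℕ) (H : TBox)
    (D1 D2 : ELConcept) (t1 t2 : DescTree) (φ : ℕ → ℕ) : Prop :=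
  BuiltOver S D1 ∧ BuiltOver S D2 ∧
  Represents t1 D1 ∧ Represents t2 D2 ∧
  Entails T (.atom C1) D1 ∧
  Entails T D2 (.atom C2) ∧
  (∀ D2', Entails T D2' (.atom C2) → PrecSq D2' D2 → PrecSq D2 D2') ∧
  WeakHom t2 t1 φ ∧
  (↑H : Set CI) = hypSetOf T t1 t2 φ

def ConnMinimal (T : TBox) (S : Set ℕ) (C1 C2 : ℕ) (H : TBox) : Prop :=
  IsHypothesis T S C1 C2 H ∧
  ∃ D1 D2 t1 t2 φ, ConnMinimalWit T S C1 C2 H D1 D2 t1 t2 φ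

/-- Packedness of a witness: no alternative `D₁'`, `φ'` (for the same `D₂`, `t₂`)
strictly enlarges one of the left-hand side labels while keeping all others. -/
def PackedWit (T : TBox) (S : Set ℕ) (C1 : ℕ) (t1 t2 : DescTree) (φ : ℕ → ℕ) : Prop :=
  ¬ ∃ (D1' : ELConcept) (t1' : DescTree) (φ' : ℕ → ℕ) (w : ℕ),
      BuiltOver S D1' ∧ Represents t1' D1' ∧ Entails T (.atom C1) D1' ∧
      WeakHom t2 t1' φ' ∧ w ∈ t2.V ∧
      t1.label (φ w) ⊂ t1'.label (φ' w) ∧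
      ∀ w' ∈ t2.V, w' ≠ w → t1.label (φ w') = t1'.label (φ' w')

def PackedConnMinimal (T : TBox) (S : Set ℕ) (C1 C2 : ℕ) (H : TBox) : Prop :=
  IsHypothesis T S C1 C2 H ∧
  ∃ D1 D2 t1 t2 φ, ConnMinimalWit T S C1 C2 H D1 D2 t1 t2 φ ∧
    PackedWit T S C1 t1 t2 φ

/-! ### First-order logic: terms, clauses, semantics -/

/-- Skolem functions: one for each (copy, axiom) pair. -/
abbrev SkFun := Bool × CI

inductive Term : Type where
  | var : ℕ → Term
  | sk0 : Term
  | app : SkFun → Term → Term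
deriving DecidableEq

/-- Ground Skolem terms. -/
inductive GTerm : Type where
  | sk0 : GTerm
  | app : SkFun → GTerm → GTerm
deriving DecidableEq

def GTerm.toTerm : GTerm → Term
  | .sk0 => .sk0
  | .app f t => .app f t.toTerm

def GTerm.depth : GTerm → ℕ
  | .sk0 => 0
  | .app _ t => t.depth + 1

inductive GTerm.Subterm : GTerm → GTerm → Prop
  | refl (t) : GTerm.Subterm t t
  | app {s t} (f) : GTerm.Subterm s t → GTerm.Subterm s (.app f t)

/-- Atoms; unary predicates `(b, A)` where `b = false` marks the original copy of the
atomic concept `A` and `b = true` its duplicate `Ā`. -/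
inductive Atm : Type where
  | conc : (Bool × ℕ) → Term → Atm
  | role : ℕ → Term → Term → Atm
deriving DecidableEq

structure Lit : Type where
  pos : Bool
  atm : Atm
deriving DecidableEq

abbrev Clause := Finset Lit

inductive GAtm : Type where
  | conc : (Bool × ℕ) → GTerm → GAtm
  | role : ℕ → GTerm → GTerm → GAtm
deriving DecidableEq

def GAtm.toAtm : GAtm → Atm
  | .conc P t => .conc P t.toTerm
  | .role r t u => .role r t.toTerm u.toTerm

structure FOInterp (α : Type) where
  c0 : α
  app : SkFun → α → α
  conc : Bool × ℕ → Set α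
  role : ℕ → Set (α × α)

def Term.eval {α : Type} (I : FOInterp α) (ρ : ℕ → α) : Term → α
  | .var x => ρ x
  | .sk0 => I.c0
  | .app f t => I.app f (t.eval I ρ)

def Atm.sat {α : Type} (I : FOInterp α) (ρ : ℕ → α) : Atm → Prop
  | .conc P t => t.eval I ρ ∈ I.conc P
  | .role r t u => (t.eval I ρ, u.eval I ρ) ∈ I.role r

def Lit.sat {α : Type} (I : FOInterp α) (ρ : ℕ → α) (l : Lit) : Prop :=
  if l.pos then l.atm.sat I ρ else ¬ l.atm.sat I ρ

/-- Satisfaction of a clause: the universal closure of the disjunction holds. -/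
def ClauseSat {α : Type} (I : FOInterp α) (c : Clause) : Prop :=
  ∀ ρ : ℕ → α, ∃ l ∈ c, l.sat I ρ

def CModels {α : Type} (I : FOInterp α) (Ψ : Set Clause) : Prop :=
  ∀ c ∈ Ψ, ClauseSat I c

def CEntails (Ψ : Set Clause) (c : Clause) : Prop :=
  ∀ (α : Type) (I : FOInterp α), CModels I Ψ → ClauseSat I c

def ClEntails (c d : Clause) : Prop := CEntails {c} d

def IsPrimeImplicate (Ψ : Set Clause) (c : Clause) : Prop :=
  CEntails Ψ c ∧ ∀ c' : Clause, CEntails Ψ c' → ClEntails c' c → ClEntails c c'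

def Term.vars : Term → Set ℕ
  | .var x => {x}
  | .sk0 => ∅
  | .app _ t => t.vars

def Atm.vars : Atm → Set ℕ
  | .conc _ t => t.vars
  | .role _ t u => t.vars ∪ u.vars

def ClauseVars (c : Clause) : Set ℕ := {x | ∃ l ∈ c, x ∈ l.atm.vars}

def ClauseGround (c : Clause) : Prop := ClauseVars c = ∅
def ClausePositive (c : Clause) : Prop := ∀ l ∈ c, l.pos = true
def ClauseNegative (c : Clause) : Prop := ∀ l ∈ c, l.pos = false

def Atm.inSig (S : Set ℕ) : Atm → Prop
  | .conc P _ => P.2 ∈ S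
  | .role _ _ _ => True

def ClauseInSig (S : Set ℕ) (c : Clause) : Prop := ∀ l ∈ c, l.atm.inSig S

/-- Positive ground prime implicates over `Σ ∪ N_R`. -/
def PIpos (S : Set ℕ) (Ψ : Set Clause) : Set Clause :=
  {c | IsPrimeImplicate Ψ c ∧ ClauseGround c ∧ ClausePositive c ∧ ClauseInSig S c}

/-- Negative ground prime implicates over `Σ ∪ N_R`. -/
def PIneg (S : Set ℕ) (Ψ : Set Clause) : Set Clause :=
  {c | IsPrimeImplicate Ψ c ∧ ClauseGround c ∧ ClauseNegative c ∧ ClauseInSig S c}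

/-- The ground atom `a` belongs (as a unit clause) to `PI^{g+}_Σ(Ψ)`. -/
def InPIpos (S : Set ℕ) (Ψ : Set Clause) (a : GAtm) : Prop :=
  ({⟨true, a.toAtm⟩} : Clause) ∈ PIpos S Ψ

/-! ### Substitutions and resolution -/

def Term.subst (σ : ℕ → Term) : Term → Term
  | .var x => σ x
  | .sk0 => .sk0
  | .app f t => .app f (t.subst σ)

def Atm.subst (σ : ℕ → Term) : Atm → Atm
  | .conc P t => .conc P (t.subst σ)
  | .role r t u => .role r (t.subst σ) (u.subst σ)

def Lit.subst (σ : ℕ → Term) (l : Lit) : Lit := ⟨l.pos, l.atm.subst σ⟩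

def ClauseSubst (σ : ℕ → Term) (c : Clause) : Clause := c.image (Lit.subst σ)

def IsUnifier (σ : ℕ → Term) (a b : Atm) : Prop := a.subst σ = b.subst σ

def IsMGU (σ : ℕ → Term) (a b : Atm) : Prop :=
  IsUnifier σ a b ∧ ∀ τ, IsUnifier τ a b → ∃ δ, ∀ x, (σ x).subst δ = τ x

/-- Resolution derivations from `Ψ`, where every resolvent must satisfy `ok`. -/
inductive Deriv (Ψ : Set Clause) (ok : Clause → Prop) : Clause → Prop
  | hyp {c : Clause} : c ∈ Ψ → Deriv Ψ ok c
  | res {c₁ c₂ : Clause} {a b : Atm} {σ : ℕ → Term} :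
      Deriv Ψ ok c₁ → Deriv Ψ ok c₂ →
      (⟨true, a⟩ : Lit) ∈ c₁ → (⟨false, b⟩ : Lit) ∈ c₂ → IsMGU σ a b →
      ok (ClauseSubst σ (c₁.erase ⟨true, a⟩ ∪ c₂.erase ⟨false, b⟩)) →
      Deriv Ψ ok (ClauseSubst σ (c₁.erase ⟨true, a⟩ ∪ c₂.erase ⟨false, b⟩))
  | factor {c : Clause} {l₁ l₂ : Lit} {σ : ℕ → Term} :
      Deriv Ψ ok c → l₁ ∈ c → l₂ ∈ c → l₁ ≠ l₂ → l₁.pos = l₂.pos →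
      IsMGU σ l₁.atm l₂.atm →
      ok (ClauseSubst σ (c.erase l₂)) →
      Deriv Ψ ok (ClauseSubst σ (c.erase l₂))

/-! ### The translation Φ of an abduction problem -/

def vx : Term := .var 0
def vy : Term := .var 1
def pcl (b : Bool) (A : ℕ) (t : Term) : Lit := ⟨true, .conc (b, A) t⟩
def ncl (b : Bool) (A : ℕ) (t : Term) : Lit := ⟨false, .conc (b, A) t⟩
def prl (r : ℕ) (t u : Term) : Lit := ⟨true, .role r t u⟩
def nrl (r : ℕ) (t u : Term) : Lit := ⟨false, .role r t u⟩

def clausesOf (b : Bool) (ci : CI) : Set Clause :=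
  match ci with
  | (.atom A, .atom B) => {({ncl b A vx, pcl b B vx} : Clause)}
  | (.conj (.atom A₁) (.atom A₂), .atom B) =>
      {({ncl b A₁ vx, ncl b A₂ vx, pcl b B vx} : Clause)}
  | (.ex r (.atom A), .atom B) =>
      {({nrl r vx vy, ncl b A vy, pcl b B vx} : Clause)}
  | (.atom A, .ex r (.atom B)) =>
      {({ncl b A vx, prl r vx (.app (b, (.atom A, .ex r (.atom B))) vx)} : Clause),
       ({ncl b A vx, pcl b B (.app (b, (.atom A, .ex r (.atom B))) vx)} : Clause)}
  | _ => ∅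

/-- The clausal translation `Φ` of the abduction problem `⟨T, Σ, C₁ ⊑ C₂⟩`. -/
def Translation (T : TBox) (C1 C2 : ℕ) : Set Clause :=
  (⋃ ci ∈ T, clausesOf false ci ∪ clausesOf true ci) ∪
  {({pcl false C1 .sk0} : Clause), ({ncl true C2 .sk0} : Clause)}

/-- The presaturation `Φ_p` of a clause set. -/
def presat (Ψ : Set Clause) : Set Clause :=
  Ψ ∪ {c | ∃ (b : Bool) (A B : ℕ),
        c = ({ncl b A vx, pcl b B vx} : Clause) ∧ CEntails Ψ c}

/-! ### Herbrand interpretations -/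

def herb (S : Set GAtm) : FOInterp GTerm where
  c0 := .sk0
  app := .app
  conc := fun P => {t | GAtm.conc P t ∈ S}
  role := fun r => {p | GAtm.role r p.1 p.2 ∈ S}

def HModels (S : Set GAtm) (Ψ : Set Clause) : Prop := CModels (herb S) Ψ

def piPosAtoms (S : Set ℕ) (Ψ : Set Clause) : Set GAtm := {a | InPIpos S Ψ a}

/-- EL semantics of a concept in a Herbrand interpretation (original predicates). -/
def gsem (I : Set GAtm) : ELConcept → Set GTerm
  | .top => Set.univ
  | .atom A => {t | GAtm.conc (false, A) t ∈ I}
  | .conj C D => gsem I C ∩ gsem I D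
  | .ex r C => {t | ∃ u, GAtm.role r t u ∈ I ∧ u ∈ gsem I C}

/-! ### Canonical models of description trees -/

/-- The canonical model `I^c(sl)` of a description tree with Skolem labeling `sl`. -/
def canonModel (t : DescTree) (sl : ℕ → GTerm) : Set GAtm :=
  {a | ∃ e ∈ t.E, a = GAtm.role e.2.1 (sl e.1) (sl e.2.2)} ∪
  {a | ∃ v ∈ t.V, ∃ A ∈ t.label v, a = GAtm.conc (false, A) (sl v)}

/-- The unary-predicate part `I^c_A(sl)` of the canonical model, as labelled pairs. -/
def canonA (t : DescTree) (sl : ℕ → GTerm) : Set (ℕ × GTerm) :=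
  {p | ∃ v ∈ t.V, p.1 ∈ t.label v ∧ p.2 = sl v}

/-- The clause `⋁_{v ∈ V₂, B ∈ l₂(v)} ¬B̄(sl v)`. -/
def negTreeClause (t : DescTree) (sl : ℕ → GTerm) : Clause :=
  t.V.biUnion (fun v =>
    (t.label v).image (fun B => (⟨false, Atm.conc (true, B) (sl v).toTerm⟩ : Lit)))

/-! ### Constructible hypotheses -/

def negClauseOf (B : Finset (ℕ × GTerm)) : Clause :=
  B.image (fun p => (⟨false, Atm.conc (true, p.1) p.2.toTerm⟩ : Lit))

def posUnit (p : ℕ × GTerm) : Clause := {⟨true, Atm.conc (false, p.1) p.2.toTerm⟩}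

/-- `C_{X,t} = ⊓{A | A(t) ∈ X}`. -/
noncomputable def CAt (X : Finset (ℕ × GTerm)) (t : GTerm) : ELConcept :=
  conjOf ((X.filter (fun p => p.2 = t)).image Prod.fst)

/-- `H` is the hypothesis constructed from the sets `A` and `B` of ground atoms. -/
def ConstructibleVia (S : Set ℕ) (Ψ : Set Clause)
    (A B : Finset (ℕ × GTerm)) (H : TBox) : Prop :=
  A.Nonempty ∧ B.Nonempty ∧
  negClauseOf B ∈ PIneg S Ψ ∧
  (∀ p ∈ B, ∃ a, InPIpos S Ψ (GAtm.conc (false, a) p.2)) ∧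
  ((↑A : Set (ℕ × GTerm)) =
    {q | InPIpos S Ψ (GAtm.conc (false, q.1) q.2) ∧ ∃ p ∈ B, p.2 = q.2}) ∧
  ((↑H : Set CI) =
    {ci | ∃ p ∈ B, ci = (CAt A p.2, CAt B p.2) ∧ ¬ PrecSq (CAt B p.2) (CAt A p.2)})

def Constructible (S : Set ℕ) (Ψ : Set Clause) (H : TBox) : Prop :=
  ∃ A B, ConstructibleVia S Ψ A B H

/-! ### Clause shapes I3–I7, signature counts -/

def isI3 (c : Clause) : Prop :=
  ∃ P Q : Bool × ℕ, c = ({⟨false, .conc P vx⟩, ⟨true, .conc Q vx⟩} : Clause)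

def isI4 (c : Clause) : Prop :=
  ∃ P₁ P₂ Q : Bool × ℕ,
    c = ({⟨false, .conc P₁ vx⟩, ⟨false, .conc P₂ vx⟩, ⟨true, .conc Q vx⟩} : Clause)

def isI5 (c : Clause) : Prop :=
  ∃ (r : ℕ) (P Q : Bool × ℕ),
    c = ({⟨false, .role r vx vy⟩, ⟨false, .conc P vy⟩, ⟨true, .conc Q vx⟩} : Clause)

def isI7 (c : Clause) : Prop :=
  ∃ (P Q : Bool × ℕ) (f : SkFun),
    c = ({⟨false, .conc P vx⟩, ⟨true, .conc Q (.app f vx)⟩} : Clause)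

/-- The atomic concept `A_sk` occurring positively in the I7-clause introducing `sk`
(as a predicate, with the copy flag of `sk`). -/
def skHeadPred (f : SkFun) : Bool × ℕ :=
  (f.1, match f.2.2 with
        | .ex _ (.atom B) => B
        | _ => 0)

def Term.funs : Term → Set SkFun
  | .var _ => ∅
  | .sk0 => ∅
  | .app f t => insert f t.funs

def Atm.funs : Atm → Set SkFun
  | .conc _ t => t.funs
  | .role _ t u => t.funs ∪ u.funs

def clauseFuns (c : Clause) : Set SkFun := {f | ∃ l ∈ c, f ∈ l.atm.funs}

def clauseConcs (c : Clause) : Set (Bool × ℕ) := {P | ∃ l ∈ c, ∃ t, l.atm = Atm.conc P t}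

/-- The number of atomic concepts occurring in a clause set. -/
noncomputable def numConcs (Ψ : Set Clause) : ℕ := Set.ncard {P | ∃ c ∈ Ψ, P ∈ clauseConcs c}

/-- The number of occurrences of existential role restrictions in a TBox. -/
def exOccs (T : TBox) : ℕ := T.sum (fun ci => ci.1.exCount + ci.2.exCount)

/-- The number of Skolem functions occurring in `Ψ` introduced for the original copy. -/
noncomputable def numOrigSk (Ψ : Set Clause) : ℕ :=
  Set.ncard {f : SkFun | f.1 = false ∧ ∃ c ∈ Ψ, f ∈ clauseFuns c}

def unitC (P : Bool × ℕ) (t : GTerm) : Clause := {⟨true, .conc P t.toTerm⟩}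
def negUnitC (P : Bool × ℕ) (t : GTerm) : Clause := {⟨false, .conc P t.toTerm⟩}

/-! ### Skolem trees and solution trees -/

structure SkolemTree where
  V : Finset ℕ
  root : ℕ
  E : Finset (ℕ × ℕ)
  s : ℕ → GTerm
  dep : ℕ → ℕ
  root_mem : root ∈ V
  s_root : s root = .sk0
  edge_mem : ∀ e ∈ E, e.1 ∈ V ∧ e.2 ∈ V
  edge_term : ∀ e ∈ E, s e.2 = s e.1 ∨ ∃ f, s e.2 = GTerm.app f (s e.1)
  parent_unique : ∀ e ∈ E, ∀ e' ∈ E, e.2 = e'.2 → e = e'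
  parent_exists : ∀ v ∈ V, v ≠ root → ∃ e ∈ E, e.2 = v
  dep_root : dep root = 0
  dep_edge : ∀ e ∈ E, dep e.2 = dep e.1 + 1

/-- `v` is an ancestor of `w` (every node is an ancestor of itself). -/
def SkolemTree.Ancestor (F : SkolemTree) (v w : ℕ) : Prop :=
  Relation.ReflTransGen (fun a b => (a, b) ∈ F.E) v w

/-- The descendants of `v` (the nodes of the subtree under `v`). -/
def SkolemTree.Desc (F : SkolemTree) (v : ℕ) : Set ℕ := {w | F.Ancestor v w}

/-- The positive labeling `l⁺`. -/
def posLab (Ψ : Set Clause) (F : SkolemTree) (v : ℕ) : Set ℕ :=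
  {A | InPIpos Set.univ Ψ (GAtm.conc (false, A) (F.s v))}

def SkolemTree.children (F : SkolemTree) (v : ℕ) : Finset ℕ :=
  (F.E.filter (fun e => e.1 = v)).image Prod.snd

def SkolemTree.leaves (F : SkolemTree) : Finset ℕ :=
  F.V.filter (fun v => F.E.filter (fun e => e.1 = v) = ∅)

/-- The unit role facts `{r(t, sk(t)) ∈ PI^{g+}}`. -/
def roleFacts (Ψ : Set Clause) : Set Clause :=
  {c | (∃ (r : ℕ) (t : GTerm) (f : SkFun),
        c = ({⟨true, Atm.role r t.toTerm (GTerm.app f t).toTerm⟩} : Clause)) ∧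
       c ∈ PIpos Set.univ Ψ}

def nonGroundOf (Ψ : Set Clause) : Set Clause := {c | c ∈ Ψ ∧ ¬ ClauseGround c}

/-- Negative labeling `l⁻` for a Skolem tree (labels are duplicate concept names,
recorded by their underlying name in `N_C`). -/
def IsNegLabeling (Ψ : Set Clause) (C2 : ℕ) (F : SkolemTree) (ln : ℕ → ℕ) : Prop :=
  ln F.root = C2 ∧
  ∀ v ∈ F.V, F.children v ≠ ∅ →
    Deriv ({negUnitC (true, ln v) (F.s v)} ∪ roleFacts Ψ ∪ nonGroundOf (presat Ψ))
      (fun _ => True)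
      ((F.children v).image
        (fun w => (⟨false, Atm.conc (true, ln w) (F.s w).toTerm⟩ : Lit)))

/-- The clause `φ_{F,l⁻}` determined by the leaves.  (Clauses are finite sets of
literals, so it is automatically considered up to repetition of literals.) -/
def leavesClause (F : SkolemTree) (ln : ℕ → ℕ) : Clause :=
  F.leaves.image (fun v => (⟨false, Atm.conc (true, ln v) (F.s v).toTerm⟩ : Lit))

def IsSolutionTree (Ψ : Set Clause) (C2 : ℕ) (F : SkolemTree) (ln : ℕ → ℕ) : Prop :=
  (∀ v ∈ F.V, (posLab Ψ F v).Nonempty) ∧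
  IsNegLabeling Ψ C2 F ln ∧
  leavesClause F ln ∈ PIneg Set.univ Ψ ∧
  ∃ (A B : Finset (ℕ × GTerm)) (H : TBox),
    ConstructibleVia Set.univ Ψ A B H ∧
    (↑B : Set (ℕ × GTerm)) = {p | ∃ v ∈ F.leaves, p = (ln v, F.s v)}

/-- The solution `{⊓l⁺(v) ⊑ l⁻(v) | v a leaf}` of a solution tree. -/
def treeSol (Ψ : Set Clause) (F : SkolemTree) (ln : ℕ → ℕ) : Set CI :=
  {ci | ∃ v ∈ F.leaves, ∃ s : Finset ℕ, (↑s : Set ℕ) = posLab Ψ F v ∧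
        ci = (conjOf s, ELConcept.atom (ln v))}

/-- Minimality: no solution tree with strictly fewer nodes has a solution
included in the solution of this one. -/
def MinimalSolutionTree (Ψ : Set Clause) (C2 : ℕ) (F : SkolemTree) (ln : ℕ → ℕ) : Prop :=
  IsSolutionTree Ψ C2 F ln ∧
  ∀ (F' : SkolemTree) (ln' : ℕ → ℕ),
    IsSolutionTree Ψ C2 F' ln' →
    treeSol Ψ F' ln' ⊆ treeSol Ψ F ln →
    F.V.card ≤ F'.V.card

/-- Replace the (unique) occurrence of `old` as a suffix of a ground term by `new`. -/
def GTerm.replaceSuffix (old new : GTerm) : GTerm → GTerm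
  | .sk0 => if GTerm.sk0 = old then new else .sk0
  | .app f u => if GTerm.app f u = old then new else .app f (GTerm.replaceSuffix old new u)


/-! ### Auxiliary development for Statement 16 -/

section Stmt16

/-- The least Herbrand model of the definite part of the translation. -/
inductive MA (T : TBox) (C1 : ℕ) : GAtm → Prop
  | c1 : MA T C1 (.conc (false, C1) .sk0)
  | i3 {b : Bool} {A B : ℕ} {u : GTerm} :
      ((ELConcept.atom A, ELConcept.atom B) : CI) ∈ T →
      MA T C1 (.conc (b, A) u) → MA T C1 (.conc (b, B) u)
  | i4 {b : Bool} {A1 A2 B : ℕ} {u : GTerm} :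
      ((ELConcept.conj (.atom A1) (.atom A2), ELConcept.atom B) : CI) ∈ T →
      MA T C1 (.conc (b, A1) u) → MA T C1 (.conc (b, A2) u) → MA T C1 (.conc (b, B) u)
  | i5 {b : Bool} {r A B : ℕ} {u v : GTerm} :
      ((ELConcept.ex r (.atom A), ELConcept.atom B) : CI) ∈ T →
      MA T C1 (.role r u v) → MA T C1 (.conc (b, A) v) → MA T C1 (.conc (b, B) u)
  | i6 {b : Bool} {A r B : ℕ} {u : GTerm} :
      ((ELConcept.atom A, ELConcept.ex r (.atom B)) : CI) ∈ T →
      MA T C1 (.conc (b, A) u) →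
      MA T C1 (.role r u (.app (b, (ELConcept.atom A, ELConcept.ex r (.atom B))) u))
  | i7 {b : Bool} {A r B : ℕ} {u : GTerm} :
      ((ELConcept.atom A, ELConcept.ex r (.atom B)) : CI) ∈ T →
      MA T C1 (.conc (b, A) u) →
      MA T C1 (.conc (b, B) (.app (b, (ELConcept.atom A, ELConcept.ex r (.atom B))) u))

def MSet (T : TBox) (C1 : ℕ) : Set GAtm := {a | MA T C1 a}

/-- Evaluation of terms over the Herbrand domain. -/
def heval (ρ : ℕ → GTerm) : Term → GTerm
  | .var x => ρ x
  | .sk0 => .sk0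
  | .app f t => .app f (heval ρ t)

lemma eval_herb (S : Set GAtm) (ρ : ℕ → GTerm) (t : Term) :
    Term.eval (herb S) ρ t = heval ρ t := by
  induction t with
  | var x => rfl
  | sk0 => rfl
  | app f t ih => exact congrArg (GTerm.app f) ih

lemma heval_toTerm (ρ : ℕ → GTerm) (u : GTerm) : heval ρ u.toTerm = u := by
  induction u with
  | sk0 => rfl
  | app f u ih => simp [GTerm.toTerm, heval, ih]

def gatmOf (ρ : ℕ → GTerm) : Atm → GAtm
  | .conc P t => .conc P (heval ρ t)
  | .role r t u => .role r (heval ρ t) (heval ρ u)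

lemma herb_sat (S : Set GAtm) (ρ : ℕ → GTerm) (a : Atm) :
    Atm.sat (herb S) ρ a ↔ gatmOf ρ a ∈ S := by
  cases a with
  | conc P t =>
      show (Term.eval (herb S) ρ t ∈ (herb S).conc P) ↔ _
      rw [eval_herb]
      exact Iff.rfl
  | role r t u =>
      show ((Term.eval (herb S) ρ t, Term.eval (herb S) ρ u) ∈ (herb S).role r) ↔ _
      rw [eval_herb, eval_herb]
      exact Iff.rfl

lemma gatmOf_toAtm (ρ : ℕ → GTerm) (g : GAtm) : gatmOf ρ g.toAtm = g := by
  cases g <;> simp [GAtm.toAtm, gatmOf, heval_toTerm]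

lemma toTerm_vars (u : GTerm) : (GTerm.toTerm u).vars = ∅ := by
  induction u with
  | sk0 => rfl
  | app f u ih => simpa [GTerm.toTerm, Term.vars] using ih

lemma exists_gterm_of_no_vars : ∀ t : Term, t.vars = ∅ → ∃ u : GTerm, t = u.toTerm := by
  intro t
  induction t with
  | var x => intro h; exact absurd h (by simp [Term.vars])
  | sk0 => intro _; exact ⟨.sk0, rfl⟩
  | app f t ih =>
      intro h
      obtain ⟨u, hu⟩ := ih (by simpa [Term.vars] using h)
      exact ⟨.app f u, by simp [GTerm.toTerm, hu]⟩

lemma exists_gatm_of_no_vars (a : Atm) (h : a.vars = ∅) : ∃ g : GAtm, a = g.toAtm := by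
  cases a with
  | conc P t =>
      obtain ⟨u, hu⟩ := exists_gterm_of_no_vars t (by simpa [Atm.vars] using h)
      exact ⟨.conc P u, by simp [GAtm.toAtm, hu]⟩
  | role r t u =>
      simp only [Atm.vars, Set.union_empty_iff] at h
      obtain ⟨v, hv⟩ := exists_gterm_of_no_vars t h.1
      obtain ⟨w, hw⟩ := exists_gterm_of_no_vars u h.2
      exact ⟨.role r v w, by simp [GAtm.toAtm, hv, hw]⟩

/-- Membership helpers for the translation. -/
lemma mem_translation_of_clause {T : TBox} {C1 C2 : ℕ} {b : Bool} {ci : CI} {c : Clause}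
    (hci : ci ∈ T) (hc : c ∈ clausesOf b ci) : c ∈ Translation T C1 C2 := by
  refine Set.mem_union_left _ ?_
  refine Set.mem_biUnion hci ?_
  cases b
  · exact Set.mem_union_left _ hc
  · exact Set.mem_union_right _ hc

/-! #### Soundness of `MA` in arbitrary first-order models -/

def gevalW {α : Type} (W : FOInterp α) : GTerm → α
  | .sk0 => W.c0
  | .app f u => W.app f (gevalW W u)

lemma eval_toTerm {α : Type} (W : FOInterp α) (ρ : ℕ → α) (u : GTerm) :
    Term.eval W ρ (GTerm.toTerm u) = gevalW W u := by
  induction u with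
  | sk0 => rfl
  | app f u ih => simp [GTerm.toTerm, Term.eval, gevalW, ih]

def holdsW {α : Type} (W : FOInterp α) : GAtm → Prop
  | .conc P u => gevalW W u ∈ W.conc P
  | .role r u v => (gevalW W u, gevalW W v) ∈ W.role r

lemma MA_sound {T : TBox} {C1 C2 : ℕ} {α : Type} (W : FOInterp α)
    (hW : CModels W (Translation T C1 C2)) :
    ∀ {a : GAtm}, MA T C1 a → holdsW W a := by
  intro a h
  induction h with
  | c1 =>
      have hc : ({pcl false C1 .sk0} : Clause) ∈ Translation T C1 C2 := by
        refine Set.mem_union_right _ ?_; left; rfl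
      obtain ⟨l, hl, hs⟩ := hW _ hc (fun _ => W.c0)
      rw [Finset.mem_singleton] at hl; subst hl
      simpa [Lit.sat, pcl, Atm.sat, Term.eval, holdsW, gevalW] using hs
  | @i3 b A B u hax _ ih =>
      have hc : ({ncl b A vx, pcl b B vx} : Clause) ∈ Translation T C1 C2 :=
        mem_translation_of_clause (b := b) hax rfl
      obtain ⟨l, hl, hs⟩ := hW _ hc (fun _ => gevalW W u)
      simp only [Finset.mem_insert, Finset.mem_singleton] at hl
      rcases hl with rfl | rfl
      · simp only [Lit.sat, ncl, Atm.sat, Term.eval, vx, if_neg Bool.false_ne_true] at hs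
        exact absurd ih hs
      · simpa [Lit.sat, pcl, Atm.sat, Term.eval, vx, holdsW] using hs
  | @i4 b A1 A2 B u hax _ _ ih1 ih2 =>
      have hc : ({ncl b A1 vx, ncl b A2 vx, pcl b B vx} : Clause) ∈ Translation T C1 C2 :=
        mem_translation_of_clause (b := b) hax rfl
      obtain ⟨l, hl, hs⟩ := hW _ hc (fun _ => gevalW W u)
      simp only [Finset.mem_insert, Finset.mem_singleton] at hl
      rcases hl with rfl | rfl | rfl
      · simp only [Lit.sat, ncl, Atm.sat, Term.eval, vx, if_neg Bool.false_ne_true] at hs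
        exact absurd ih1 hs
      · simp only [Lit.sat, ncl, Atm.sat, Term.eval, vx, if_neg Bool.false_ne_true] at hs
        exact absurd ih2 hs
      · simpa [Lit.sat, pcl, Atm.sat, Term.eval, vx, holdsW] using hs
  | @i5 b r A B u v hax _ _ ihr iha =>
      have hc : ({nrl r vx vy, ncl b A vy, pcl b B vx} : Clause) ∈ Translation T C1 C2 :=
        mem_translation_of_clause (b := b) hax rfl
      obtain ⟨l, hl, hs⟩ := hW _ hc
        (fun n => if n = 0 then gevalW W u else gevalW W v)
      simp only [Finset.mem_insert, Finset.mem_singleton] at hl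
      rcases hl with rfl | rfl | rfl
      · simp only [Lit.sat, nrl, Atm.sat, Term.eval, vx, vy,
          if_neg Bool.false_ne_true] at hs
        exact absurd ihr hs
      · simp only [Lit.sat, ncl, Atm.sat, Term.eval, vx, vy,
          if_neg Bool.false_ne_true] at hs
        exact absurd iha hs
      · simpa [Lit.sat, pcl, Atm.sat, Term.eval, vx, holdsW] using hs
  | @i6 b A r B u hax _ ih =>
      have hc : ({ncl b A vx,
          prl r vx (.app (b, (ELConcept.atom A, ELConcept.ex r (.atom B))) vx)} : Clause)
          ∈ Translation T C1 C2 :=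
        mem_translation_of_clause (b := b) hax (Set.mem_insert _ _)
      obtain ⟨l, hl, hs⟩ := hW _ hc (fun _ => gevalW W u)
      simp only [Finset.mem_insert, Finset.mem_singleton] at hl
      rcases hl with rfl | rfl
      · simp only [Lit.sat, ncl, Atm.sat, Term.eval, vx, if_neg Bool.false_ne_true] at hs
        exact absurd ih hs
      · simpa [Lit.sat, prl, Atm.sat, Term.eval, vx, holdsW, gevalW] using hs
  | @i7 b A r B u hax _ ih =>
      have hc : ({ncl b A vx,
          pcl b B (.app (b, (ELConcept.atom A, ELConcept.ex r (.atom B))) vx)} : Clause)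
          ∈ Translation T C1 C2 :=
        mem_translation_of_clause (b := b) hax (Set.mem_insert_of_mem _ rfl)
      obtain ⟨l, hl, hs⟩ := hW _ hc (fun _ => gevalW W u)
      simp only [Finset.mem_insert, Finset.mem_singleton] at hl
      rcases hl with rfl | rfl
      · simp only [Lit.sat, ncl, Atm.sat, Term.eval, vx, if_neg Bool.false_ne_true] at hs
        exact absurd ih hs
      · simpa [Lit.sat, pcl, Atm.sat, Term.eval, vx, holdsW, gevalW] using hs

lemma MA_entails {T : TBox} {C1 C2 : ℕ} {a : GAtm} (h : MA T C1 a) :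
    CEntails (Translation T C1 C2) ({⟨true, a.toAtm⟩} : Clause) := by
  intro α W hW ρ
  refine ⟨⟨true, a.toAtm⟩, Finset.mem_singleton_self _, ?_⟩
  have hh := MA_sound W hW h
  cases a with
  | conc P u =>
      simpa [Lit.sat, GAtm.toAtm, Atm.sat, eval_toTerm, holdsW] using hh
  | role r u v =>
      simpa [Lit.sat, GAtm.toAtm, Atm.sat, eval_toTerm, holdsW] using hh

/-! #### The least Herbrand model satisfies the translation -/

lemma herb_MSet_models {T : TBox} {C1 C2 : ℕ} (hNF : NormalForm T)
    (hcon : ¬ MA T C1 (.conc (true, C2) .sk0)) :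
    CModels (herb (MSet T C1)) (Translation T C1 C2) := by
  intro c hc
  rcases hc with hc | hc
  · simp only [Set.mem_iUnion] at hc
    obtain ⟨ci, hci, hc⟩ := hc
    have hb : ∃ b, c ∈ clausesOf b ci := by
      rcases hc with h | h
      exacts [⟨false, h⟩, ⟨true, h⟩]
    obtain ⟨b, hc⟩ := hb
    rcases hNF ci hci with ⟨A, B, rfl⟩ | ⟨A1, A2, B, rfl⟩ | ⟨r, A, B, rfl⟩ | ⟨A, r, B, rfl⟩
    · simp only [clausesOf, Set.mem_singleton_iff] at hc
      subst hc
      intro ρ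
      by_cases hA : MA T C1 (.conc (b, A) (ρ 0))
      · exact ⟨pcl b B vx, by simp,
          by simpa [Lit.sat, pcl, herb_sat, gatmOf, heval, vx, MSet] using MA.i3 hci hA⟩
      · exact ⟨ncl b A vx, by simp,
          by simpa [Lit.sat, ncl, herb_sat, gatmOf, heval, vx, MSet] using hA⟩
    · simp only [clausesOf, Set.mem_singleton_iff] at hc
      subst hc
      intro ρ
      by_cases hA1 : MA T C1 (.conc (b, A1) (ρ 0))
      · by_cases hA2 : MA T C1 (.conc (b, A2) (ρ 0))
        · exact ⟨pcl b B vx, by simp,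
            by simpa [Lit.sat, pcl, herb_sat, gatmOf, heval, vx, MSet] using
              MA.i4 hci hA1 hA2⟩
        · exact ⟨ncl b A2 vx, by simp,
            by simpa [Lit.sat, ncl, herb_sat, gatmOf, heval, vx, MSet] using hA2⟩
      · exact ⟨ncl b A1 vx, by simp,
          by simpa [Lit.sat, ncl, herb_sat, gatmOf, heval, vx, MSet] using hA1⟩
    · simp only [clausesOf, Set.mem_singleton_iff] at hc
      subst hc
      intro ρ
      by_cases hR : MA T C1 (.role r (ρ 0) (ρ 1))
      · by_cases hA : MA T C1 (.conc (b, A) (ρ 1))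
        · exact ⟨pcl b B vx, by simp,
            by simpa [Lit.sat, pcl, herb_sat, gatmOf, heval, vx, MSet] using
              MA.i5 hci hR hA⟩
        · exact ⟨ncl b A vy, by simp,
            by simpa [Lit.sat, ncl, herb_sat, gatmOf, heval, vy, MSet] using hA⟩
      · exact ⟨nrl r vx vy, by simp,
          by simpa [Lit.sat, nrl, herb_sat, gatmOf, heval, vx, vy, MSet] using hR⟩
    · simp only [clausesOf, Set.mem_insert_iff, Set.mem_singleton_iff] at hc
      rcases hc with rfl | rfl
      · intro ρ
        by_cases hA : MA T C1 (.conc (b, A) (ρ 0))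
        · exact ⟨prl r vx (.app (b, (ELConcept.atom A, ELConcept.ex r (.atom B))) vx),
            by simp,
            by simpa [Lit.sat, prl, herb_sat, gatmOf, heval, vx, MSet] using MA.i6 hci hA⟩
        · exact ⟨ncl b A vx, by simp,
            by simpa [Lit.sat, ncl, herb_sat, gatmOf, heval, vx, MSet] using hA⟩
      · intro ρ
        by_cases hA : MA T C1 (.conc (b, A) (ρ 0))
        · exact ⟨pcl b B (.app (b, (ELConcept.atom A, ELConcept.ex r (.atom B))) vx),
            by simp,
            by simpa [Lit.sat, pcl, herb_sat, gatmOf, heval, vx, MSet] using MA.i7 hci hA⟩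
        · exact ⟨ncl b A vx, by simp,
            by simpa [Lit.sat, ncl, herb_sat, gatmOf, heval, vx, MSet] using hA⟩
  · rcases hc with rfl | rfl
    · intro ρ
      exact ⟨pcl false C1 .sk0, by simp,
        by simpa [Lit.sat, pcl, herb_sat, gatmOf, heval, MSet] using MA.c1⟩
    · intro ρ
      exact ⟨ncl true C2 .sk0, by simp,
        by simpa [Lit.sat, ncl, herb_sat, gatmOf, heval, MSet] using hcon⟩

/-! #### Consistency via EL models -/

open Classical in
noncomputable def stepF {α : Type} (I : Interp α) : SkFun → α → α := fun f e =>
  match f with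
  | (_, (ELConcept.atom _, ELConcept.ex r (ELConcept.atom B))) =>
      if h : ∃ y, (e, y) ∈ I.role r ∧ y ∈ (ELConcept.atom B).sem I then h.choose else e
  | _ => e

noncomputable def gval {α : Type} (I : Interp α) (d : α) : GTerm → α
  | .sk0 => d
  | .app f u => stepF I f (gval I d u)

def holdsI {α : Type} (I : Interp α) (d : α) : GAtm → Prop
  | .conc P u => gval I d u ∈ I.conc P.2
  | .role r u v => (gval I d u, gval I d v) ∈ I.role r

lemma MA_sem {T : TBox} {C1 : ℕ} {α : Type} (I : Interp α) (hI : Models I T) (d : α)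
    (hd : d ∈ I.conc C1) : ∀ {a : GAtm}, MA T C1 a → holdsI I d a := by
  intro a h
  induction h with
  | c1 => exact hd
  | i3 hax _ ih => exact hI _ hax ih
  | i4 hax _ _ ih1 ih2 => exact hI _ hax ⟨ih1, ih2⟩
  | @i5 b r A B u v hax _ _ ihr iha =>
      exact hI _ hax ⟨gval I d v, ihr, iha⟩
  | @i6 b A r B u hax _ ih =>
      have hx : gval I d u ∈ (ELConcept.ex r (.atom B)).sem I := hI _ hax ih
      obtain ⟨y, hy1, hy2⟩ := hx
      have hcond : ∃ y, (gval I d u, y) ∈ I.role r ∧ y ∈ (ELConcept.atom B).sem I :=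
        ⟨y, hy1, hy2⟩
      show (gval I d u,
        stepF I (b, (ELConcept.atom A, ELConcept.ex r (.atom B))) (gval I d u)) ∈ I.role r
      simp only [stepF, dif_pos hcond]
      exact hcond.choose_spec.1
  | @i7 b A r B u hax _ ih =>
      have hx : gval I d u ∈ (ELConcept.ex r (.atom B)).sem I := hI _ hax ih
      obtain ⟨y, hy1, hy2⟩ := hx
      have hcond : ∃ y, (gval I d u, y) ∈ I.role r ∧ y ∈ (ELConcept.atom B).sem I :=
        ⟨y, hy1, hy2⟩
      show stepF I (b, (ELConcept.atom A, ELConcept.ex r (.atom B))) (gval I d u)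
        ∈ I.conc B
      simp only [stepF, dif_pos hcond]
      exact hcond.choose_spec.2

lemma MA_consistent {T : TBox} {C1 C2 : ℕ}
    (hno : ¬ Entails T (.atom C1) (.atom C2)) :
    ¬ MA T C1 (.conc (true, C2) .sk0) := by
  intro h
  apply hno
  intro α I hI d hd
  exact MA_sem I hI d hd h

/-! #### A Skolem function avoided by the least model -/

def fstar : SkFun := (false, (ELConcept.top, ELConcept.top))

def NoStar : GTerm → Prop
  | .sk0 => True
  | .app f u => f ≠ fstar ∧ NoStar u

def NoStarA : GAtm → Prop
  | .conc _ u => NoStar u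
  | .role _ u v => NoStar u ∧ NoStar v

lemma MA_nostar {T : TBox} {C1 : ℕ} : ∀ {a : GAtm}, MA T C1 a → NoStarA a := by
  intro a h
  induction h with
  | c1 => trivial
  | i3 _ _ ih => exact ih
  | i4 _ _ _ ih1 _ => exact ih1
  | i5 _ _ _ ihr _ => exact ihr.1
  | i6 _ _ ih => exact ⟨ih, by simp [fstar], ih⟩
  | i7 _ _ ih => exact ⟨by simp [fstar], ih⟩

def rhostar : ℕ → GTerm := fun _ => GTerm.app fstar GTerm.sk0

lemma star_of_var : ∀ t : Term, t.vars.Nonempty → ¬ NoStar (heval rhostar t) := by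
  intro t
  induction t with
  | var x => intro _ h; exact h.1 rfl
  | sk0 => intro h; exact absurd h (by simp [Term.vars])
  | app f t ih =>
      intro h hns
      exact ih (by simpa [Term.vars] using h) hns.2

lemma gatm_star_not_MA {T : TBox} {C1 : ℕ} (a : Atm) (h : a.vars ≠ ∅) :
    ¬ MA T C1 (gatmOf rhostar a) := by
  intro hma
  have hns := MA_nostar hma
  cases a with
  | conc P t =>
      have hne : t.vars.Nonempty := by
        rw [Set.nonempty_iff_ne_empty]; simpa [Atm.vars] using h
      exact star_of_var t hne hns
  | role r t u =>
      have hne : t.vars.Nonempty ∨ u.vars.Nonempty := by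
        by_contra hc
        push_neg at hc
        exact h (by simp [Atm.vars, hc.1, hc.2])
      rcases hne with hne | hne
      · exact star_of_var t hne hns.1
      · exact star_of_var u hne hns.2

/-! #### Supportedness of terms in the least model -/

inductive Supp (T : TBox) (C1 : ℕ) : GTerm → Prop
  | sk0 : Supp T C1 .sk0
  | app {b : Bool} {A r B : ℕ} {u : GTerm} :
      ((ELConcept.atom A, ELConcept.ex r (.atom B)) : CI) ∈ T →
      MA T C1 (.conc (b, A) u) → Supp T C1 u →
      Supp T C1 (.app (b, (ELConcept.atom A, ELConcept.ex r (.atom B))) u)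

def SuppA (T : TBox) (C1 : ℕ) : GAtm → Prop
  | .conc _ u => Supp T C1 u
  | .role _ u v => Supp T C1 u ∧ Supp T C1 v

lemma MA_supp {T : TBox} {C1 : ℕ} : ∀ {a : GAtm}, MA T C1 a → SuppA T C1 a := by
  intro a h
  induction h with
  | c1 => exact Supp.sk0
  | i3 _ _ ih => exact ih
  | i4 _ _ _ ih1 _ => exact ih1
  | i5 _ _ _ ihr _ => exact ihr.1
  | i6 hax hA ih => exact ⟨ih, Supp.app hax hA ih⟩
  | i7 hax hA ih => exact Supp.app hax hA ih

lemma supp_subterm {T : TBox} {C1 : ℕ} {s w : GTerm} (hs : GTerm.Subterm s w) :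
    Supp T C1 w → Supp T C1 s := by
  induction hs with
  | refl => exact id
  | app f h ih =>
      intro hw
      cases hw with
      | app _ _ hu => exact ih hu

lemma supp_app_inv {T : TBox} {C1 : ℕ} {b : Bool} {A r B : ℕ} {u : GTerm}
    (h : Supp T C1 (.app (b, (ELConcept.atom A, ELConcept.ex r (.atom B))) u)) :
    MA T C1 (.conc (b, A) u) := by
  cases h with
  | app _ hA _ => exact hA

lemma MA_role_inv {T : TBox} {C1 : ℕ} {r : ℕ} {u v : GTerm}
    (h : MA T C1 (.role r u v)) :
    ∃ (b : Bool) (A B : ℕ),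
      ((ELConcept.atom A, ELConcept.ex r (.atom B)) : CI) ∈ T ∧
      v = .app (b, (ELConcept.atom A, ELConcept.ex r (.atom B))) u ∧
      MA T C1 (.conc (b, A) u) := by
  cases h with
  | i6 hax hA => exact ⟨_, _, _, hax, rfl, hA⟩

lemma toAtm_vars (a : GAtm) : (GAtm.toAtm a).vars = ∅ := by
  cases a <;> simp [GAtm.toAtm, Atm.vars, toTerm_vars]

/-! #### Primeness of entailed ground unit positive clauses -/

lemma MA_of_entails {T : TBox} {C1 C2 : ℕ} (hNF : NormalForm T)
    (hcon : ¬ MA T C1 (.conc (true, C2) .sk0)) {a : GAtm}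
    (h : CEntails (Translation T C1 C2) ({⟨true, a.toAtm⟩} : Clause)) : MA T C1 a := by
  obtain ⟨l, hl, hs⟩ := h _ _ (herb_MSet_models hNF hcon) (fun _ => GTerm.sk0)
  rw [Finset.mem_singleton] at hl; subst hl
  simpa [Lit.sat, herb_sat, gatmOf_toAtm, MSet] using hs

lemma unit_prime {T : TBox} {C1 C2 : ℕ} (hNF : NormalForm T)
    (hcon : ¬ MA T C1 (.conc (true, C2) .sk0)) (a : GAtm) (c' : Clause)
    (h1 : CEntails (Translation T C1 C2) c')
    (h2 : ClEntails c' ({⟨true, a.toAtm⟩} : Clause)) :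
    (⟨true, a.toAtm⟩ : Lit) ∈ c' := by
  -- Step A : all literals of c' are positive
  have hpos : ∀ l ∈ c', l.pos = true := by
    by_contra hneg
    push_neg at hneg
    obtain ⟨l, hl, hlp'⟩ := hneg
    have hlp : l.pos = false := by simpa using hlp'
    have hmod : CModels (herb (∅ : Set GAtm)) {c'} := by
      intro c hc ρ
      rw [Set.mem_singleton_iff] at hc; subst hc
      exact ⟨l, hl, by simp [Lit.sat, hlp, herb_sat]⟩
    obtain ⟨l', hl', hs⟩ := h2 _ _ hmod (fun _ => GTerm.sk0)
    rw [Finset.mem_singleton] at hl'; subst hl'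
    simp [Lit.sat, herb_sat, gatmOf_toAtm] at hs
  -- Step B : some assignment grounds every literal of c' to a
  have hS1 : ¬ ClauseSat (herb {g : GAtm | g ≠ a}) c' := by
    intro hsat
    have hmod : CModels (herb {g : GAtm | g ≠ a}) {c'} := by
      intro c hc
      rw [Set.mem_singleton_iff] at hc; subst hc; exact hsat
    obtain ⟨l', hl', hs⟩ := h2 _ _ hmod (fun _ => GTerm.sk0)
    rw [Finset.mem_singleton] at hl'; subst hl'
    simp [Lit.sat, herb_sat, gatmOf_toAtm] at hs
  rw [ClauseSat] at hS1
  push_neg at hS1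
  obtain ⟨ρ₁, hρ₁⟩ := hS1
  have hval : ∀ l ∈ c', gatmOf ρ₁ l.atm = a := by
    intro l hl
    have h := hρ₁ l hl
    simp only [Lit.sat, hpos l hl, if_true, herb_sat, Set.mem_setOf_eq, not_not] at h
    exact h
  -- Step C : evaluate at the star assignment in the least model
  obtain ⟨l, hl, hs⟩ := h1 _ _ (herb_MSet_models hNF hcon) rhostar
  have hspos := hpos l hl
  rw [Lit.sat, hspos, if_pos rfl, herb_sat] at hs
  have hma : MA T C1 (gatmOf rhostar l.atm) := hs
  have hgv : l.atm.vars = ∅ := by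
    by_contra hv
    exact gatm_star_not_MA l.atm hv hma
  obtain ⟨g, hg⟩ := exists_gatm_of_no_vars l.atm hgv
  have hga : g = a := by
    have h := hval l hl
    rwa [hg, gatmOf_toAtm] at h
  have : l = ⟨true, a.toAtm⟩ := by
    cases l with
    | mk p atm =>
        simp only at hspos hg
        rw [hspos, hg, hga]
  rwa [this] at hl

lemma MA_pipos {T : TBox} {C1 C2 : ℕ} (hNF : NormalForm T)
    (hno : ¬ Entails T (.atom C1) (.atom C2)) {a : GAtm} (hMA : MA T C1 a) :
    InPIpos Set.univ (Translation T C1 C2) a := by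
  have hcon := MA_consistent (T := T) (C1 := C1) hno
  refine ⟨⟨MA_entails hMA, ?_⟩, ?_, ?_, ?_⟩
  · intro c' h1 h2
    have hmem := unit_prime hNF hcon a c' h1 h2
    intro α W hW ρ
    obtain ⟨l', hl', hs⟩ := hW _ rfl ρ
    rw [Finset.mem_singleton] at hl'; subst hl'
    exact ⟨_, hmem, hs⟩
  · rw [ClauseGround]
    ext x
    simp [ClauseVars, toAtm_vars]
  · intro l hl
    rw [Finset.mem_singleton] at hl; subst hl; rfl
  · intro l hl
    rw [Finset.mem_singleton] at hl; subst hl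
    cases a <;> simp [GAtm.toAtm, Atm.inSig]

end Stmt16

/-- repetition of role facts along subterms with the same Skolem head. -/
theorem role_fact_repetition
    (T : TBox) (C1 C2 : ℕ) (hNF : NormalForm T)
    (hno : ¬ Entails T (.atom C1) (.atom C2))
    (r : ℕ) (sk : SkFun) (t t' : GTerm)
    (hin : InPIpos Set.univ (Translation T C1 C2) (GAtm.role r t (GTerm.app sk t)))
    (hsub : GTerm.Subterm (GTerm.app sk t') (GTerm.app sk t)) :
    InPIpos Set.univ (Translation T C1 C2) (GAtm.role r t' (GTerm.app sk t')) := by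
  have hcon := MA_consistent (T := T) hno
  obtain ⟨⟨hent, -⟩, -⟩ := hin
  have hMA : MA T C1 (.role r t (.app sk t)) := MA_of_entails hNF hcon hent
  obtain ⟨b, A, B, hax, heq, hA⟩ := MA_role_inv hMA
  have hsk : sk = (b, (ELConcept.atom A, ELConcept.ex r (.atom B))) := by
    injection heq with h1 h2
  subst hsk
  have hsuppt : Supp T C1 t := MA_supp hA
  have hsupp : Supp T C1 (.app (b, (ELConcept.atom A, ELConcept.ex r (.atom B))) t) :=
    Supp.app hax hA hsuppt
  have hsupp' := supp_subterm hsub hsupp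
  have hA' := supp_app_inv hsupp'
  exact MA_pipos hNF hno (MA.i6 hax hA')

end ELAbd
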